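/- For every m ≥ 0 and every m-box B over an interval J ⊆ I, the closure of B in Î is an m-box over the closure of J, all of whose constituent arcs are closed arcs. In particular, the maximal m-box over a closed interval is a closed subset of Î. -/

import Mathlib

open Set MeasureTheory ENNReal Topology

noncomputable section

namespace Tent

/-- The core interval `I = [0,1]`. -/
def I : Set ℝ := Set.Icc 0 1

/-- The core tent map of slope `s`, `f(x) = min(s·x + 2 − s, s·(1 − x))`. -/
def f (s : ℝ) (x : ℝ) : ℝ := min (s * x + 2 - s) (s * (1 - x))

/-- The critical point `c = 1 − 1/s`. -/
def c (s : ℝ) : ℝ := 1 - 1 / s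

/-- The post-critical set `PC = {c, f(c), f²(c), …}`. -/
def PC (s : ℝ) : Set ℝ := Set.range fun n => (f s)^[n] (c s)

/-- The inverse limit, as a set of sequences: `x_i ∈ I` and `f(x_{i+1}) = x_i`. -/
def IhatSet (s : ℝ) : Set (ℕ → ℝ) :=
  {x | (∀ i, x i ∈ I) ∧ ∀ i, f s (x (i + 1)) = x i}

/-- The inverse limit space `Î`. -/
abbrev Ihat (s : ℝ) : Type := ↥(IhatSet s)

/-- The metric on `Î`: `d(x,y) = Σ_i |x_i − y_i|/2^i`. -/
def dHat (s : ℝ) (x y : Ihat s) : ℝ := ∑' i : ℕ, |x.1 i - y.1 i| / 2 ^ i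

/-- The shift map on sequences: `x ↦ (f(x₀), x₀, x₁, …)`. -/
def fhatSeq (s : ℝ) (x : ℕ → ℝ) : ℕ → ℝ := fun n => Nat.casesOn n (f s (x 0)) fun k => x k

/-- The image under `f̂ⁿ` of a subset of `Î`. -/
def fhatImage (s : ℝ) (n : ℕ) (K : Set (Ihat s)) : Set (Ihat s) :=
  {y : Ihat s | ∃ x ∈ K, y.1 = (fhatSeq s)^[n] (Subtype.val x)}

/-- The inverse `f̂⁻ⁿ` of the shift homeomorphism: drop the first `n` coordinates. -/
def fhatInv (s : ℝ) (n : ℕ) (x : Ihat s) : Ihat s :=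
  ⟨fun i => x.1 (i + n), fun i => x.2.1 (i + n), fun i => by
    show f s (x.1 (i + 1 + n)) = x.1 (i + n)
    rw [show i + 1 + n = i + n + 1 from by omega]
    exact x.2.2 (i + n)⟩

/-- `γ` is an arc in `Î`: homeomorphic to a nontrivial interval of `ℝ`. -/
def IsArc (s : ℝ) (γ : Set (Ihat s)) : Prop :=
  ∃ J : Set ℝ, J.OrdConnected ∧ J.Nontrivial ∧ Nonempty (γ ≃ₜ J)

/-- `γ` is a closed arc in `Î`: homeomorphic to `[0,1]`. -/
def IsClosedArc (s : ℝ) (γ : Set (Ihat s)) : Prop := Nonempty (γ ≃ₜ (Set.Icc (0:ℝ) 1))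

/-- `γ` is an open arc in `Î`: homeomorphic to `(0,1)`. -/
def IsOpenArc (s : ℝ) (γ : Set (Ihat s)) : Prop := Nonempty (γ ≃ₜ (Set.Ioo (0:ℝ) 1))

/-- `x` is an endpoint of the closed arc `γ`. -/
def IsEndpoint (s : ℝ) (x : Ihat s) (γ : Set (Ihat s)) : Prop :=
  ∃ (e : γ ≃ₜ (Set.Icc (0:ℝ) 1)) (hx : x ∈ γ), (e ⟨x, hx⟩).1 = 0 ∨ (e ⟨x, hx⟩).1 = 1

/-- `γ` is `m`-flat over the nontrivial interval `J ⊆ I`: the projection `π_m`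
restricted to `γ` is a homeomorphism onto `J`. -/
def MFlatOver (s : ℝ) (m : ℕ) (γ : Set (Ihat s)) (J : Set ℝ) : Prop :=
  J ⊆ I ∧ J.OrdConnected ∧ J.Nontrivial ∧
    ∃ e : γ ≃ₜ J, ∀ x : γ, (e x).1 = x.1.1 m

/-- `γ` is an `m`-flat arc. -/
def IsMFlat (s : ℝ) (m : ℕ) (γ : Set (Ihat s)) : Prop := ∃ J : Set ℝ, MFlatOver s m γ J

/-- `γ` is a flat arc: `m`-flat for some `m ≥ 0`. -/
def IsFlat (s : ℝ) (γ : Set (Ihat s)) : Prop := ∃ m : ℕ, IsMFlat s m γ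

/-- `γ` is a flat closed arc. -/
def IsFlatClosedArc (s : ℝ) (γ : Set (Ihat s)) : Prop := IsClosedArc s γ ∧ IsFlat s γ

/-- `p 0, …, p k` occur in order along the closed arc `γ` (from one endpoint to the other). -/
def InOrderAlong (s : ℝ) (γ : Set (Ihat s)) (k : ℕ) (p : ℕ → Ihat s) : Prop :=
  ∃ (e : γ ≃ₜ (Set.Icc (0:ℝ) 1)) (t : ℕ → Set.Icc (0:ℝ) 1),
    (∀ i j, i ≤ j → j ≤ k → t i ≤ t j) ∧ ∀ i ≤ k, (e.symm (t i)).1 = p i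

/-- The arclength of a closed arc `γ` in the metric `d`: the supremum over finite
sequences of points occurring in order along `γ` of the sums of successive distances. -/
def arcLength (s : ℝ) (γ : Set (Ihat s)) : ℝ≥0∞ :=
  ⨆ (k : ℕ) (p : ℕ → Ihat s) (_ : InOrderAlong s γ k p),
    ENNReal.ofReal (∑ i ∈ Finset.range k, dHat s (p i) (p (i + 1)))

/-- A continuum: a compact connected subset of `Î` with more than one point. -/
def IsContinuum (s : ℝ) (K : Set (Ihat s)) : Prop :=
  IsCompact K ∧ IsConnected K ∧ K.Nontrivial

/-- `K` is `ε`-dense in `Î`. -/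
def EpsDense (s : ℝ) (ε : ℝ) (K : Set (Ihat s)) : Prop :=
  ∀ x : Ihat s, ∃ y ∈ K, dHat s x y ≤ ε

/-- `S` is metrically infinite: contains flat closed arcs of arbitrarily large length. -/
def MetricallyInfinite (s : ℝ) (S : Set (Ihat s)) : Prop :=
  ∀ N : ℝ, 0 < N → ∃ γ : Set (Ihat s), γ ⊆ S ∧ IsFlatClosedArc s γ ∧
    ENNReal.ofReal N < arcLength s γ

/-- An arc is bi-dense if, for some point `p` in it, both connected components of
`γ ∖ {p}` are dense in `Î`. -/
def BiDense (s : ℝ) (γ : Set (Ihat s)) : Prop :=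
  ∃ p ∈ γ, ∀ q ∈ γ \ {p}, Dense (connectedComponentIn (γ \ {p}) q)

/-- An arc is metrically bi-infinite if, for some point `p` in it, both connected
components of `γ ∖ {p}` are metrically infinite. -/
def MetricallyBiInfinite (s : ℝ) (γ : Set (Ihat s)) : Prop :=
  ∃ p ∈ γ, ∀ q ∈ γ \ {p}, MetricallyInfinite s (connectedComponentIn (γ \ {p}) q)

/-- `x` is globally leaf regular: its path component is a bi-dense, metrically
bi-infinite open arc. -/
def GloballyLeafRegular (s : ℝ) (x : Ihat s) : Prop :=
  IsOpenArc s (pathComponent x) ∧ BiDense s (pathComponent x) ∧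
    MetricallyBiInfinite s (pathComponent x)

/-- A `0`-box over `J`: a union of arcs, each `0`-flat over `J`. -/
def ZeroBoxOver (s : ℝ) (B : Set (Ihat s)) (J : Set ℝ) : Prop :=
  ∃ A : Set (Set (Ihat s)), (∀ γ ∈ A, MFlatOver s 0 γ J) ∧ B = ⋃₀ A

/-- An `m`-box over `J`: `f̂⁻ᵐ(B)` is a `0`-box over `J`. -/
def MBoxOver (s : ℝ) (m : ℕ) (B : Set (Ihat s)) (J : Set ℝ) : Prop :=
  ZeroBoxOver s (fhatInv s m '' B) J

/-- The maximal `m`-box over `J`: the union of all arcs `m`-flat over `J`. -/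
def maximalMBox (s : ℝ) (m : ℕ) (J : Set ℝ) : Set (Ihat s) :=
  ⋃₀ {γ : Set (Ihat s) | MFlatOver s m γ J}

/-- The point cylinder `[y₀, …, y_n]`. -/
def pointCyl (s : ℝ) (y : ℕ → ℝ) (n : ℕ) : Set (Ihat s) :=
  {z : Ihat s | ∀ i ≤ n, z.1 i = y i}

/-!
Along an `m`-flat arc every coordinate is a Lipschitz function of the `m`-th one, with a
constant depending only on `s`, `m` and the index: below level `m` because `f` is
`s`-Lipschitz, above it because `f` shrinks the diameter of an interval by at most the factor
`2/s` (it has slope `±s` and folds only once). So every `m`-flat arc over `J` is the range of a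
section `closure J → Î` taken from one equi-Lipschitz family, which is compact in the product
topology. A point of the closure of a union of such arcs is a limit of points on the arcs, and a
cluster point of the corresponding sections is a section through it; its range is a closed arc,
`m`-flat over `closure J` and contained in the closure. Finally `f̂⁻ᵐ` is a continuous injection of
the compact space `Î`, hence a closed embedding, so an `m`-box is a union of `m`-flat arcs.
-/

variable {s : ℝ}

lemma mul_c (hs : s ≠ 0) : s * c s = s - 1 := by
  rw [c, mul_sub, mul_one, mul_one_div_cancel hs]

lemma f_of_le_c (hs : 0 < s) {x : ℝ} (hx : x ≤ c s) : f s x = s * x + 2 - s := by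
  have := mul_c hs.ne'
  exact min_eq_left (by nlinarith)

lemma f_of_c_le (hs : 0 < s) {x : ℝ} (hx : c s ≤ x) : f s x = s * (1 - x) := by
  have := mul_c hs.ne'
  exact min_eq_right (by nlinarith)

lemma f_c (hs : 0 < s) : f s (c s) = 1 := by
  rw [f_of_le_c hs le_rfl, mul_c hs.ne']
  ring

lemma continuous_f : Continuous (f s) := by
  unfold f
  fun_prop

lemma lipschitzWith_f (hs : 0 ≤ s) : LipschitzWith s.toNNReal (f s) := by
  refine LipschitzWith.of_dist_le_mul fun a b => ?_
  rw [Real.dist_eq, Real.dist_eq, Real.coe_toNNReal _ hs]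
  refine (abs_min_sub_min_le_max _ _ _ _).trans (max_le (le_of_eq ?_) (le_of_eq ?_))
  · rw [show s * a + 2 - s - (s * b + 2 - s) = s * (a - b) by ring, abs_mul, abs_of_nonneg hs]
  · rw [show s * (1 - a) - s * (1 - b) = s * (b - a) by ring, abs_mul, abs_of_nonneg hs,
      abs_sub_comm]

lemma abs_sub_le_of_abs_f_sub_le (hs : 0 < s) {K : Set ℝ} (hK : IsPreconnected K) {D : ℝ}
    (hD : ∀ a ∈ K, ∀ b ∈ K, |f s a - f s b| ≤ D) {a b : ℝ} (ha : a ∈ K) (hb : b ∈ K) :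
    |a - b| ≤ 2 / s * D := by
  wlog hab : a ≤ b generalizing a b
  · rw [abs_sub_comm]
    exact this hb ha (le_of_not_ge hab)
  have hD0 : 0 ≤ D := (abs_nonneg _).trans (hD a ha a ha)
  rw [abs_of_nonpos (sub_nonpos.2 hab), neg_sub, div_mul_eq_mul_div, le_div_iff₀ hs]
  rcases le_total b (c s) with hbc | hcb
  · have h := (le_abs_self _).trans (hD b hb a ha)
    rw [f_of_le_c hs hbc, f_of_le_c hs (hab.trans hbc)] at h
    nlinarith
  rcases le_total (c s) a with hca | hac
  · have h := (le_abs_self _).trans (hD a ha b hb)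
    rw [f_of_c_le hs hca, f_of_c_le hs (hca.trans hab)] at h
    nlinarith
  -- the fold `c` lies between `a` and `b`, where `f` attains its maximum `1`
  have hcK : c s ∈ K := hK.Icc_subset ha hb ⟨hac, hcb⟩
  have h₁ := (le_abs_self _).trans (hD (c s) hcK a ha)
  have h₂ := (le_abs_self _).trans (hD (c s) hcK b hb)
  rw [f_c hs, f_of_le_c hs hac] at h₁
  rw [f_c hs, f_of_c_le hs hcb] at h₂
  nlinarith [mul_c hs.ne']

lemma isClosed_IhatSet : IsClosed (IhatSet s) := by
  simp only [IhatSet, ofPred_and, ofPred_forall]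
  exact (isClosed_iInter fun i => isClosed_Icc.preimage (continuous_apply i)).inter
    (isClosed_iInter fun i => isClosed_eq (continuous_f.comp (continuous_apply _))
      (continuous_apply i))

instance : CompactSpace (Ihat s) :=
  isCompact_iff_compactSpace.mp <| (isCompact_univ_pi fun _ => isCompact_Icc).of_isClosed_subset
    isClosed_IhatSet fun _ hx i _ => hx.1 i

lemma coord_eq_iterate (x : Ihat s) (i k : ℕ) : x.1 i = (f s)^[k] (x.1 (i + k)) := by
  induction k with
  | zero => rfl
  | succ k ih => rw [ih, Function.iterate_succ_apply, ← add_assoc, x.2.2]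

lemma abs_coord_sub_le (hs : 0 ≤ s) (x y : Ihat s) (i k : ℕ) :
    |x.1 i - y.1 i| ≤ s ^ k * |x.1 (i + k) - y.1 (i + k)| := by
  rw [coord_eq_iterate x i k, coord_eq_iterate y i k]
  simpa [Real.dist_eq, hs] using
    ((lipschitzWith_f hs).iterate k).dist_le_mul (x.1 (i + k)) (y.1 (i + k))

lemma abs_coord_add_sub_le_of_isPreconnected (hs : 0 < s) {P : Set (Ihat s)}
    (hP : IsPreconnected P) {m : ℕ} {D : ℝ} (hD : ∀ a ∈ P, ∀ b ∈ P, |a.1 m - b.1 m| ≤ D)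
    (k : ℕ) {a b : Ihat s} (ha : a ∈ P) (hb : b ∈ P) :
    |a.1 (m + k) - b.1 (m + k)| ≤ (2 / s) ^ k * D := by
  induction k generalizing a b with
  | zero => simpa using hD a ha b hb
  | succ k ih =>
    have hK : IsPreconnected ((fun z : Ihat s => z.1 (m + k + 1)) '' P) :=
      hP.image _ ((continuous_apply _).comp continuous_subtype_val).continuousOn
    have h := abs_sub_le_of_abs_f_sub_le hs hK (D := (2 / s) ^ k * D) ?_
      (mem_image_of_mem _ ha) (mem_image_of_mem _ hb)
    · rw [pow_succ', mul_assoc]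
      exact h
    · rintro _ ⟨a', ha', rfl⟩ _ ⟨b', hb', rfl⟩
      rw [a'.2.2, b'.2.2]
      exact ih ha' hb'

/-- This is `s ^ (m - i)` for `i ≤ m` and `(2 / s) ^ (i - m)` for `m ≤ i`, as `ℕ`-subtraction
truncates. -/
def flatLipConst (s : ℝ) (m i : ℕ) : ℝ := s ^ (m - i) * (2 / s) ^ (i - m)

lemma flatLipConst_nonneg (hs : 0 ≤ s) (m i : ℕ) : 0 ≤ flatLipConst s m i := by
  unfold flatLipConst
  positivity

lemma abs_coord_sub_le_of_isPreconnected (hs : 0 < s) {P : Set (Ihat s)} (hP : IsPreconnected P)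
    {m : ℕ} {D : ℝ} (hD : ∀ a ∈ P, ∀ b ∈ P, |a.1 m - b.1 m| ≤ D) (i : ℕ) {a b : Ihat s}
    (ha : a ∈ P) (hb : b ∈ P) : |a.1 i - b.1 i| ≤ flatLipConst s m i * D := by
  rcases le_total i m with him | hmi
  · obtain ⟨k, rfl⟩ := Nat.exists_eq_add_of_le him
    calc |a.1 i - b.1 i| ≤ s ^ k * |a.1 (i + k) - b.1 (i + k)| := abs_coord_sub_le hs.le a b i k
      _ ≤ s ^ k * D := by gcongr; exact hD a ha b hb
      _ = flatLipConst s (i + k) i * D := by simp [flatLipConst]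
  · obtain ⟨k, rfl⟩ := Nat.exists_eq_add_of_le hmi
    simpa [flatLipConst] using abs_coord_add_sub_le_of_isPreconnected hs hP hD k ha hb

def flatSections (s : ℝ) (m : ℕ) (K : Set ℝ) : Set (K → Ihat s) :=
  {φ | (∀ τ, (φ τ).1 m = τ) ∧
    ∀ i τ τ', |(φ τ).1 i - (φ τ').1 i| ≤ flatLipConst s m i * |τ.1 - τ'.1|}

lemma isClosed_flatSections {m : ℕ} {K : Set ℝ} : IsClosed (flatSections s m K) := by
  have hev : ∀ τ i, Continuous fun φ : K → Ihat s => (φ τ).1 i := fun τ i =>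
    (continuous_apply i).comp (continuous_subtype_val.comp (continuous_apply τ))
  simp only [flatSections, ofPred_and, ofPred_forall]
  exact (isClosed_iInter fun τ => isClosed_eq (hev τ m) continuous_const).inter
    (isClosed_iInter fun i => isClosed_iInter fun τ => isClosed_iInter fun τ' =>
      isClosed_le ((hev τ i).sub (hev τ' i)).abs continuous_const)

lemma continuous_of_mem_flatSections {m : ℕ} {K : Set ℝ} {φ : K → Ihat s}
    (hφ : φ ∈ flatSections s m K) : Continuous φ := by
  refine continuous_induced_rng.2 (continuous_pi fun i => ?_)
  refine (LipschitzWith.of_dist_le_mul (K := (flatLipConst s m i).toNNReal)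
    fun τ τ' => ?_).continuous
  rw [Real.dist_eq, Subtype.dist_eq, Real.dist_eq]
  exact (hφ.2 i τ τ').trans (mul_le_mul_of_nonneg_right (Real.le_coe_toNNReal _) (abs_nonneg _))

section MFlatOver

variable {m : ℕ} {γ : Set (Ihat s)} {J : Set ℝ}

lemma MFlatOver.exists_section (hγ : MFlatOver s m γ J) :
    ∃ σ : J → Ihat s, Continuous σ ∧ range σ = γ ∧ ∀ τ, (σ τ).1 m = τ := by
  obtain ⟨-, -, -, e, he⟩ := hγ
  refine ⟨fun τ => e.symm τ, continuous_subtype_val.comp e.symm.continuous, ?_,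
    fun τ => by rw [← he, e.apply_symm_apply]⟩
  exact (e.symm.surjective.range_comp Subtype.val).trans Subtype.range_coe

lemma mFlatOver_range {K : Set ℝ} (hKI : K ⊆ I) (hK : K.OrdConnected)
    (hKn : K.Nontrivial) {φ : K → Ihat s} (hφ : Continuous φ) (hφm : ∀ τ, (φ τ).1 m = τ) :
    MFlatOver s m (range φ) K := by
  have hmem : ∀ z ∈ range φ, z.1 m ∈ K := by
    rintro _ ⟨τ, rfl⟩
    rw [hφm]
    exact τ.2
  let e : range φ ≃ₜ K :=
    { toFun := fun z => ⟨z.1.1 m, hmem z.1 z.2⟩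
      invFun := fun τ => ⟨φ τ, mem_range_self τ⟩
      left_inv := by
        rintro ⟨_, τ, rfl⟩
        exact Subtype.ext (congrArg φ (Subtype.ext (hφm τ)))
      right_inv := fun τ => Subtype.ext (hφm τ)
      continuous_toFun := ((continuous_apply m).comp
        (continuous_subtype_val.comp continuous_subtype_val)).subtype_mk _
      continuous_invFun := hφ.subtype_mk _ }
  exact ⟨hKI, hK, hKn, e, fun _ => rfl⟩

lemma MFlatOver.coord_mem (hγ : MFlatOver s m γ J) {z : Ihat s} (hz : z ∈ γ) : z.1 m ∈ J := by
  obtain ⟨σ, -, rfl, hσm⟩ := hγ.exists_section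
  obtain ⟨τ, rfl⟩ := hz
  exact (hσm τ).symm ▸ τ.2

lemma MFlatOver.abs_coord_sub_le (hs : 0 < s) (hγ : MFlatOver s m γ J) {x y : Ihat s}
    (hx : x ∈ γ) (hy : y ∈ γ) (i : ℕ) :
    |x.1 i - y.1 i| ≤ flatLipConst s m i * |x.1 m - y.1 m| := by
  have hJ := hγ.2.1
  obtain ⟨σ, hσ, rfl, hσm⟩ := hγ.exists_section
  obtain ⟨⟨t, ht⟩, rfl⟩ := hx
  obtain ⟨⟨t', ht'⟩, rfl⟩ := hy
  rw [hσm, hσm]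
  have hU : IsPreconnected (Subtype.val ⁻¹' uIcc t t' : Set J) := by
    rw [← Topology.IsInducing.subtypeVal.isPreconnected_image, Subtype.image_preimage_coe,
      inter_eq_right.2 (hJ.uIcc_subset ht ht')]
    exact isPreconnected_uIcc
  refine abs_coord_sub_le_of_isPreconnected hs (hU.image σ hσ.continuousOn) ?_ i
    ⟨_, left_mem_uIcc, rfl⟩ ⟨_, right_mem_uIcc, rfl⟩
  rintro _ ⟨τ, hτ, rfl⟩ _ ⟨τ', hτ', rfl⟩
  rw [hσm, hσm, abs_sub_comm t]
  exact abs_sub_le_of_uIcc_subset_uIcc (uIcc_subset_uIcc hτ' hτ)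

lemma MFlatOver.exists_mem_flatSections (hs : 0 < s) (hγ : MFlatOver s m γ J) :
    ∃ φ ∈ flatSections s m (closure J), γ ⊆ range φ ∧ range φ ⊆ closure γ := by
  classical
  obtain ⟨σ, -, rfl, hσm⟩ := hγ.exists_section
  let G : ℕ → ℝ → ℝ := fun i t => if ht : t ∈ J then (σ ⟨t, ht⟩).1 i else 0
  have hGσ : ∀ i t (ht : t ∈ J), G i t = (σ ⟨t, ht⟩).1 i := fun i t ht => dif_pos ht
  have hG : ∀ i, LipschitzOnWith (flatLipConst s m i).toNNReal (G i) J := fun i =>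
    LipschitzOnWith.of_dist_le_mul fun t ht t' ht' => by
      rw [Real.dist_eq, Real.dist_eq, Real.coe_toNNReal _ (flatLipConst_nonneg hs.le m i),
        hGσ i t ht, hGσ i t' ht']
      simpa only [hσm] using hγ.abs_coord_sub_le hs (mem_range_self _) (mem_range_self _) i
  choose g hg hgG using fun i => (hG i).extend_real
  have hmaps : MapsTo (fun t i => g i t) (closure J) (Subtype.val '' closure (range σ)) :=
    MapsTo.closure_left
      (fun t ht => ⟨σ ⟨t, ht⟩, subset_closure (mem_range_self _),
        funext fun i => ((hgG i ht).symm.trans (hGσ i t ht)).symm⟩)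
      (continuous_pi fun i => (hg i).continuous)
      ((Topology.IsClosedEmbedding.subtypeVal isClosed_IhatSet).isClosedMap _ isClosed_closure)
  choose φ hφσ hφg using fun τ : closure J => hmaps τ.2
  refine ⟨φ, ⟨fun τ => ?_, fun i τ τ' => ?_⟩, ?_, range_subset_iff.2 hφσ⟩
  · rw [hφg]
    refine EqOn.closure (fun t ht => ?_) (hg m).continuous continuous_id τ.2
    rw [id, ← hgG m ht, hGσ m t ht, hσm]
  · rw [hφg, hφg, ← Real.dist_eq, ← Real.dist_eq,
      ← Real.coe_toNNReal _ (flatLipConst_nonneg hs.le m i)]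
    exact (hg i).dist_le_mul τ τ'
  · rintro _ ⟨⟨t, ht⟩, rfl⟩
    refine ⟨⟨t, subset_closure ht⟩, Subtype.ext (funext fun i => ?_)⟩
    rw [hφg, ← hGσ i t ht]
    exact (hgG i ht).symm

end MFlatOver

section sUnion

open Filter

variable {m : ℕ} {J : Set ℝ} {A : Set (Set (Ihat s))}

lemma exists_mem_flatSections_of_mem_closure_sUnion (hs : 0 < s)
    (hA : ∀ γ ∈ A, MFlatOver s m γ J) {x : Ihat s} (hx : x ∈ closure (⋃₀ A)) :
    ∃ φ ∈ flatSections s m (closure J), x ∈ range φ ∧ range φ ⊆ closure (⋃₀ A) := by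
  obtain ⟨u, hu, hux⟩ := mem_closure_iff_seq_limit.mp hx
  choose γ hγA huγ using hu
  choose φ hφ hγφ hφγ using fun n => (hA _ (hγA n)).exists_mem_flatSections hs
  choose τ hτ using fun n => hγφ n (huγ n)
  have hcoord : ∀ i, Tendsto (fun n => (u n).1 i) atTop (𝓝 (x.1 i)) := fun i =>
    ((continuous_apply i).tendsto _).comp (tendsto_subtype_rng.1 hux)
  let τ₀ : closure J := ⟨x.1 m, mem_closure_of_tendsto (hcoord m)
    (Eventually.of_forall fun n => (hA _ (hγA n)).coord_mem (huγ n))⟩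
  have hτ₀ : Tendsto (fun n => φ n τ₀) atTop (𝓝 x) := by
    refine tendsto_subtype_rng.2 (tendsto_pi_nhds.2 fun i => ?_)
    have hsmall : Tendsto (fun n => (φ n τ₀).1 i - (u n).1 i) atTop (𝓝 0) := by
      refine squeeze_zero_norm (fun n => ?_)
        (by simpa using (((hcoord m).const_sub (x.1 m)).abs.const_mul (flatLipConst s m i)))
      rw [Real.norm_eq_abs, ← hτ n]
      simpa [(hφ n).1] using (hφ n).2 i τ₀ (τ n)
    simpa using hsmall.add (hcoord i)
  let Ω := flatSections s m (closure J) ∩ univ.pi fun _ => closure (⋃₀ A)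
  have hΩ : IsCompact Ω :=
    (isClosed_flatSections.inter (isClosed_set_pi fun _ _ => isClosed_closure)).isCompact
  have hφΩ : ∀ n, φ n ∈ Ω := fun n =>
    ⟨hφ n, fun τ _ => closure_mono (subset_sUnion_of_mem (hγA n)) (hφγ n ⟨τ, rfl⟩)⟩
  obtain ⟨ψ, ⟨hψ, hψA⟩, hcl⟩ :=
    hΩ.exists_mapClusterPt (f := atTop) (tendsto_principal.2 (Eventually.of_forall hφΩ))
  have hψx : ψ τ₀ = x :=
    eq_of_nhds_neBot ((hcl.continuousAt_comp (continuous_apply τ₀).continuousAt).clusterPt.mono hτ₀)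
  exact ⟨ψ, hψ, ⟨τ₀, hψx⟩, range_subset_iff.2 fun τ => hψA τ trivial⟩

lemma exists_closure_eq_Icc (hJI : J ⊆ I) (hJ : J.OrdConnected) (hJn : J.Nontrivial) :
    ∃ a b, a < b ∧ closure J = Icc a b := by
  have hJc : IsCompact (closure J) :=
    isCompact_Icc.of_isClosed_subset isClosed_closure (closure_minimal hJI isClosed_Icc)
  have hJab := eq_Icc_of_connected_compact ⟨hJn.nonempty.closure, hJ.isPreconnected.closure⟩ hJc
  refine ⟨_, _, not_le.1 fun hba => ?_, hJab⟩
  exact (hJn.mono subset_closure).not_subsingleton (hJab ▸ subsingleton_Icc_of_ge hba)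

lemma exists_isClosedArc_of_mem_closure_sUnion (hs : 0 < s)
    (hA : ∀ γ ∈ A, MFlatOver s m γ J) {x : Ihat s} (hx : x ∈ closure (⋃₀ A)) :
    ∃ γ, IsClosedArc s γ ∧ MFlatOver s m γ (closure J) ∧ x ∈ γ ∧ γ ⊆ closure (⋃₀ A) := by
  obtain ⟨-, γ₀, hγ₀A, -⟩ := closure_nonempty_iff.1 ⟨x, hx⟩
  obtain ⟨hJI, hJ, hJn, -⟩ := hA γ₀ hγ₀A
  obtain ⟨a, b, hab, hJab⟩ := exists_closure_eq_Icc hJI hJ hJn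
  obtain ⟨φ, hφ, hxφ, hφA⟩ := exists_mem_flatSections_of_mem_closure_sUnion hs hA hx
  have hflat : MFlatOver s m (range φ) (closure J) :=
    mFlatOver_range (closure_minimal hJI isClosed_Icc) (hJab ▸ ordConnected_Icc)
      (hJn.mono subset_closure) (continuous_of_mem_flatSections hφ) hφ.1
  obtain ⟨-, -, -, e, -⟩ := id hflat
  exact ⟨range φ, ⟨e.trans ((Homeomorph.setCongr hJab).trans (iccHomeoI a b hab))⟩, hflat, hxφ, hφA⟩

end sUnion

lemma fhatInv_injective (n : ℕ) : Function.Injective (fhatInv s n) := fun x y hxy => by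
  ext i
  rw [coord_eq_iterate x i n, coord_eq_iterate y i n]
  exact congrArg (f s)^[n] (congrFun (congrArg Subtype.val hxy) i)

lemma isClosedEmbedding_fhatInv (n : ℕ) : IsClosedEmbedding (fhatInv s n) :=
  Continuous.isClosedEmbedding (continuous_induced_rng.2 <| continuous_pi fun i =>
    (continuous_apply (i + n)).comp continuous_subtype_val) (fhatInv_injective n)

lemma MFlatOver.preimage_fhatInv {k n : ℕ} {γ : Set (Ihat s)} {J : Set ℝ}
    (hγ : MFlatOver s k γ J) (hγn : γ ⊆ range (fhatInv s n)) :
    MFlatOver s (k + n) (fhatInv s n ⁻¹' γ) J := by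
  obtain ⟨hJI, hJ, hJn, e, he⟩ := hγ
  exact ⟨hJI, hJ, hJn,
    ((isClosedEmbedding_fhatInv n).isEmbedding.homeomorphOfSubsetRange hγn).trans e,
    fun z => he _⟩

lemma MBoxOver.exists_eq_sUnion {m : ℕ} {B : Set (Ihat s)} {J : Set ℝ} (hB : MBoxOver s m B J) :
    ∃ A : Set (Set (Ihat s)), (∀ γ ∈ A, MFlatOver s m γ J) ∧ B = ⋃₀ A := by
  obtain ⟨A₀, hA₀, hBA₀⟩ := hB
  refine ⟨preimage (fhatInv s m) '' A₀, ?_, ?_⟩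
  · rintro _ ⟨γ, hγ, rfl⟩
    simpa using (hA₀ γ hγ).preimage_fhatInv (n := m)
      fun z hz => image_subset_range _ _ (hBA₀ ▸ subset_sUnion_of_mem hγ hz)
  · rw [sUnion_image, ← preimage_sUnion, ← hBA₀, preimage_image_eq _ (fhatInv_injective m)]

theorem closure_of_box_general (s : ℝ) (hs₁ : Real.sqrt 2 < s) :
    (∀ (m : ℕ) (J : Set ℝ) (B : Set (Ihat s)), J ⊆ I → J.OrdConnected →
      J.Nontrivial → MBoxOver s m B J →
      ∃ A : Set (Set (Ihat s)),
        (∀ γ ∈ A, IsClosedArc s γ ∧ MFlatOver s m γ (closure J)) ∧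
        closure B = ⋃₀ A) ∧
    ∀ (m : ℕ) (a b : ℝ), a < b → Set.Icc a b ⊆ I →
      IsClosed (maximalMBox s m (Set.Icc a b)) := by
  have hs : 0 < s := (Real.sqrt_nonneg 2).trans_lt hs₁
  refine ⟨fun m J B _ _ _ hB => ?_, fun m a b _ _ => ?_⟩
  · obtain ⟨A, hA, rfl⟩ := hB.exists_eq_sUnion
    refine ⟨{γ | IsClosedArc s γ ∧ MFlatOver s m γ (closure J) ∧ γ ⊆ closure (⋃₀ A)},
      fun γ hγ => ⟨hγ.1, hγ.2.1⟩,
      subset_antisymm (fun x hx => ?_) (sUnion_subset fun γ hγ => hγ.2.2)⟩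
    obtain ⟨γ, hγ, hflat, hxγ, hγA⟩ := exists_isClosedArc_of_mem_closure_sUnion hs hA hx
    exact ⟨γ, ⟨hγ, hflat, hγA⟩, hxγ⟩
  · refine isClosed_of_closure_subset fun x hx => ?_
    obtain ⟨γ, -, hflat, hxγ, -⟩ :=
      exists_isClosedArc_of_mem_closure_sUnion (A := {γ | MFlatOver s m γ (Icc a b)}) hs
        (fun γ hγ => hγ) hx
    rw [closure_Icc] at hflat
    exact ⟨γ, hflat, hxγ⟩

/-- the closure of an `m`-box over `J` is an `m`-box over the closure
of `J`, all of whose constituent arcs are closed arcs; in particular the maximal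
`m`-box over a closed interval is closed in `Î`. -/
theorem closure_of_box (s : ℝ) (hs₁ : Real.sqrt 2 < s) (hs₂ : s < 2) :
    (∀ (m : ℕ) (J : Set ℝ) (B : Set (Ihat s)), J ⊆ I → J.OrdConnected →
      J.Nontrivial → MBoxOver s m B J →
      ∃ A : Set (Set (Ihat s)),
        (∀ γ ∈ A, IsClosedArc s γ ∧ MFlatOver s m γ (closure J)) ∧
        closure B = ⋃₀ A) ∧
    ∀ (m : ℕ) (a b : ℝ), a < b → Set.Icc a b ⊆ I →
      IsClosed (maximalMBox s m (Set.Icc a b)) :=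
  closure_of_box_general s hs₁

end Tent
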